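/- Let (G,P) be a quasi-lattice ordered group, T : P → B(ℓ²(P)) the Toeplitz representation T_s ε_t = ε_{st}, and D the closed linear span of {T_s T_s* : s ∈ P} (the diagonal subalgebra). Then every bounded operator M on ℓ²(P) commuting with all T_s T_s* (s ∈ P) is a multiplication operator: there exists g ∈ ℓ∞(P) with ‖g‖_∞ ≤ ‖M‖ such that M ε_p = g(p) ε_p for all p ∈ P. -/

import Mathlib

open scoped InnerProductSpace

/-!
Write `Q p = T p (T p)†`. Since `(T p)† (b q) = b (p⁻¹ q)` when `p ≤ q` (i.e. `p⁻¹ q ∈ P`) and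
`0` otherwise, `Q p` fixes `b q` for `p ≤ q` and kills it otherwise. For `s ≠ t`, moving the
self-adjoint `Q t` (resp. `Q s`) across `⟪b s, M (b t)⟫` shows that this matrix entry vanishes
unless `t ≤ s` (resp. `s ≤ t`); as `P ∩ P⁻¹ = {1}`, both hold only if `s = t`. So `M` is
diagonal, and its diagonal entries are bounded by `‖M‖`.
-/

namespace HilbertBasis

variable {ι 𝕜 E : Type*} [RCLike 𝕜] [NormedAddCommGroup E] [InnerProductSpace 𝕜 E]

theorem ext_inner (b : HilbertBasis ι 𝕜 E) {x y : E} (h : ∀ i, ⟪b i, x⟫_𝕜 = ⟪b i, y⟫_𝕜) :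
    x = y :=
  b.repr.injective <| lp.ext <| funext fun i => by simpa only [b.repr_apply_apply] using h i

theorem eq_inner_smul_of_inner_eq_zero (b : HilbertBasis ι 𝕜 E) {x : E} {t : ι}
    (h : ∀ s, s ≠ t → ⟪b s, x⟫_𝕜 = 0) : x = ⟪b t, x⟫_𝕜 • b t := by
  classical
  refine b.ext_inner fun s => ?_
  rw [inner_smul_right, orthonormal_iff_ite.mp b.orthonormal]
  by_cases hst : s = t
  · simp [hst]
  · simp [hst, h s hst]

end HilbertBasis

theorem norm_inner_apply_le_opNorm {𝕜 E : Type*} [RCLike 𝕜] [NormedAddCommGroup E]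
    [InnerProductSpace 𝕜 E] (M : E →L[𝕜] E) {u : E} (hu : ‖u‖ = 1) : ‖⟪u, M u⟫_𝕜‖ ≤ ‖M‖ :=
  calc ‖⟪u, M u⟫_𝕜‖ ≤ ‖u‖ * ‖M u‖ := norm_inner_le_norm _ _
    _ ≤ ‖u‖ * (‖M‖ * ‖u‖) := by gcongr; exact M.le_opNorm u
    _ = ‖M‖ := by rw [hu, one_mul, mul_one]

theorem IsSelfAdjoint.inner_apply_map_of_commute {𝕜 E : Type*} [RCLike 𝕜] [NormedAddCommGroup E]
    [InnerProductSpace 𝕜 E] [CompleteSpace E] {Q M : E →L[𝕜] E} (hQ : IsSelfAdjoint Q)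
    (hMQ : Commute M Q) (x y : E) : ⟪Q x, M y⟫_𝕜 = ⟪x, M (Q y)⟫_𝕜 := by
  rw [← ContinuousLinearMap.adjoint_inner_right, hQ.adjoint_eq, ← mul_apply_eq_comp, ← hMQ.eq,
    mul_apply_eq_comp]

theorem eq_of_mem_mul_of_mem_mul {G : Type*} [Group G] {P : Set G}
    (hpos : ∀ a ∈ P, a⁻¹ ∈ P → a = 1) {s t : G} (hts : ∃ r ∈ P, s = t * r)
    (hst : ∃ r ∈ P, t = s * r) : s = t := by
  obtain ⟨r, hr, rfl⟩ := hts
  obtain ⟨r', hr', ht⟩ := hst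
  have hrr' : r * r' = 1 := by
    rwa [mul_assoc, left_eq_mul] at ht
  rw [← inv_eq_of_mul_eq_one_left hrr', hpos r' hr' (by rwa [inv_eq_of_mul_eq_one_left hrr']),
    inv_one, mul_one]

section Toeplitz

variable {G : Type*} [Group G] {P : Set G} {hmul : ∀ a ∈ P, ∀ b ∈ P, a * b ∈ P}
  {H : Type*} [NormedAddCommGroup H] [InnerProductSpace ℂ H] [CompleteSpace H]
  {b : HilbertBasis P ℂ H} {T : P → H →L[ℂ] H}

open ContinuousLinearMap

open Classical in
theorem inner_basis_adjoint_apply_basis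
    (hT : ∀ s t : P, T s (b t) = b ⟨(s : G) * (t : G), hmul _ s.2 _ t.2⟩) (p q r : P) :
    ⟪b r, adjoint (T p) (b q)⟫_ℂ = if (p : G) * r = q then 1 else 0 := by
  rw [adjoint_inner_right, hT, orthonormal_iff_ite.mp b.orthonormal]
  simp only [Subtype.ext_iff]

theorem adjoint_apply_basis_eq_zero
    (hT : ∀ s t : P, T s (b t) = b ⟨(s : G) * (t : G), hmul _ s.2 _ t.2⟩) {p q : P}
    (hpq : ¬ ∃ r ∈ P, (q : G) = p * r) : adjoint (T p) (b q) = 0 :=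
  b.ext_inner fun r => by
    rw [inner_basis_adjoint_apply_basis hT, inner_zero_right,
      if_neg fun h => hpq ⟨r, r.2, h.symm⟩]

theorem adjoint_apply_basis_self
    (hT : ∀ s t : P, T s (b t) = b ⟨(s : G) * (t : G), hmul _ s.2 _ t.2⟩) (hone : (1 : G) ∈ P)
    (p : P) : adjoint (T p) (b p) = b ⟨1, hone⟩ := by
  classical
  refine b.ext_inner fun r => ?_
  rw [inner_basis_adjoint_apply_basis hT, orthonormal_iff_ite.mp b.orthonormal]
  simp only [Subtype.ext_iff, mul_eq_left]

theorem mul_adjoint_apply_basis_eq_zero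
    (hT : ∀ s t : P, T s (b t) = b ⟨(s : G) * (t : G), hmul _ s.2 _ t.2⟩) {p q : P}
    (hpq : ¬ ∃ r ∈ P, (q : G) = p * r) : (T p * adjoint (T p)) (b q) = 0 := by
  rw [mul_apply_eq_comp, adjoint_apply_basis_eq_zero hT hpq, map_zero]

theorem mul_adjoint_apply_basis_self
    (hT : ∀ s t : P, T s (b t) = b ⟨(s : G) * (t : G), hmul _ s.2 _ t.2⟩) (hone : (1 : G) ∈ P)
    (p : P) : (T p * adjoint (T p)) (b p) = b p := by
  rw [mul_apply_eq_comp, adjoint_apply_basis_self hT hone, hT]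
  simp only [mul_one]

theorem inner_basis_apply_basis_eq_zero_of_commute
    (hT : ∀ s t : P, T s (b t) = b ⟨(s : G) * (t : G), hmul _ s.2 _ t.2⟩) (hone : (1 : G) ∈ P)
    (hpos : ∀ a ∈ P, a⁻¹ ∈ P → a = 1) {M : H →L[ℂ] H}
    (hM : ∀ p : P, Commute M (T p * adjoint (T p))) {s t : P} (hst : s ≠ t) :
    ⟪b s, M (b t)⟫_ℂ = 0 := by
  have hQ (p : P) : IsSelfAdjoint (T p * adjoint (T p)) := IsSelfAdjoint.mul_star_self (T p)
  by_contra hne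
  have hts : ∃ r ∈ P, (s : G) = t * r := by
    by_contra hts
    refine hne ?_
    rw [← mul_adjoint_apply_basis_self hT hone t, ← (hQ t).inner_apply_map_of_commute (hM t),
      mul_adjoint_apply_basis_eq_zero hT hts, inner_zero_left]
  have hst' : ∃ r ∈ P, (t : G) = s * r := by
    by_contra hst'
    refine hne ?_
    rw [← mul_adjoint_apply_basis_self hT hone s, (hQ s).inner_apply_map_of_commute (hM s),
      mul_adjoint_apply_basis_eq_zero hT hst', map_zero, inner_zero_right]
  exact hst (Subtype.ext (eq_of_mem_mul_of_mem_mul hpos hts hst'))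

end Toeplitz

/-- Lemma 6.11: any bounded operator `M` on `ℓ²(P)` commuting with all the diagonal
projections `T_p T_p*` is a multiplication operator by some `g ∈ ℓ∞(P)` with
`‖g‖_∞ ≤ ‖M‖`. -/
theorem stmt5 {G : Type*} [Group G] (P : Set G)
    (hone : (1 : G) ∈ P)
    (hmul : ∀ a ∈ P, ∀ b ∈ P, a * b ∈ P)
    (hpos : ∀ a ∈ P, a⁻¹ ∈ P → a = 1)
    {H : Type*} [NormedAddCommGroup H] [InnerProductSpace ℂ H] [CompleteSpace H]
    (b : HilbertBasis P ℂ H)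
    (T : P → H →L[ℂ] H)
    (hT : ∀ s t : P, T s (b t) = b ⟨(s : G) * (t : G), hmul _ s.2 _ t.2⟩)
    (M : H →L[ℂ] H)
    (hM : ∀ p : P, M * (T p * ContinuousLinearMap.adjoint (T p)) =
      (T p * ContinuousLinearMap.adjoint (T p)) * M) :
    ∃ g : P → ℂ, (∀ t : P, ‖g t‖ ≤ ‖M‖) ∧ ∀ t : P, M (b t) = g t • b t :=
  ⟨fun t => ⟪b t, M (b t)⟫_ℂ, fun t => norm_inner_apply_le_opNorm M (b.orthonormal.1 t),
    fun _ => b.eq_inner_smul_of_inner_eq_zero fun _ hst =>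
      inner_basis_apply_basis_eq_zero_of_commute hT hone hpos hM hst⟩
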